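/- For all φ,χ∈F, α∈R⁺, i∈{1,…,n} with α(h_i)≠0, and b∈A, writing p_i(φ,χ)=Ω_{α_i}(p(φ,χ)) and C(z,k)=z(z−1)⋯(z−k+1)/k! for the generalized binomial coefficient (z∈ℤ, k∈ℕ), the following hold in U(g⊗A): (i) (x_α^+⊗b)·p_i(φ,χ) = Σ_{ψ₁∈F(φ),ψ₂∈F(χ),|ψ₁|=|ψ₂|} C(α(h_i)+|ψ₁|−1,|ψ₁|)·m(ψ₁)m(ψ₂)·p_i(φ−ψ₁,χ−ψ₂)·(x_α^+⊗bπ(ψ₁)π(ψ₂)); and (ii) p_i(φ,χ)·(x_α^−⊗b) = Σ_{ψ₁∈F(φ),ψ₂∈F(χ),|ψ₁|=|ψ₂|} C(α(h_i)+|ψ₁|−1,|ψ₁|)·m(ψ₁)m(ψ₂)·(x_α^−⊗bπ(ψ₁)π(ψ₂))·p_i(φ−ψ₁,χ−ψ₂). -/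

import Mathlib

/-!
Write `c = α(h_i)`, and `ψ = (ψ₁, ψ₂)` for pairs, with `m(ψ) = m(ψ₁) m(ψ₂)` when
`|ψ₁| = |ψ₂|` and `0` otherwise. Commuting `x_α^+ ⊗ b` past `h_i ⊗ a` produces
`c · x_α^+ ⊗ ab`. Multiply the recursion
`-|φ| p(φ,χ) = Σ_{ψ ≠ 0} m(ψ) (h ⊗ π(ψ)) p((φ,χ) - ψ)` on the left by `x_α^+ ⊗ b` and apply this
and the induction hypothesis: two double sums over `ψ + θ ≤ (φ, χ)` appear. Swapping the order
of summation turns the first back into the recursion for `p((φ,χ) - θ)`, giving the weight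
`-(|φ| - |θ|)`. Grouping the second by `μ = ψ + θ` gives the weight
`c Σ_{0 < κ ≤ μ} m(κ) C(c + |μ-κ| - 1, |μ-κ|) m(μ-κ) = |μ| C(c + |μ| - 1, |μ|) m(μ)`, by the
Vandermonde identity for multinomial coefficients and the hockey-stick identity. The two weights
add up to `-|φ|` times the claimed coefficient.

Part (ii) is part (i) in the opposite algebra: the `h ⊗ a` commute with each other, hence with
every `p(φ, χ)`, so the recursion survives reversing products.
-/

open scoped TensorProduct
open Finsupp
open scoped Classical

noncomputable section

namespace MapAlgebra

/-- the divided power `u^{(r)} = u^r / r!` in a `ℂ`-algebra. -/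
def dp {S : Type*} [Ring S] [Algebra ℂ S] (u : S) (r : ℕ) : S :=
  (r.factorial : ℂ)⁻¹ • u ^ r

variable {A : Type*} [CommRing A] [Algebra ℂ A]

/-- `|ψ| = Σ_a ψ(a)` for a multiset `ψ` of elements of `A`. -/
def wt (ψ : A →₀ ℕ) : ℕ := ψ.sum fun _ n => n

/-- `π(ψ) = ∏_a a^{ψ(a)}`. -/
def piF (ψ : A →₀ ℕ) : A := ψ.prod fun a n => a ^ n

/-- `m(ψ) = |ψ|! / ∏_a ψ(a)!`. -/
def mF (ψ : A →₀ ℕ) : ℕ := Finsupp.multinomial ψ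

variable {L : Type*} [LieRing L] [LieAlgebra ℂ L]

instance : LieAlgebra ℂ (A ⊗[ℂ] L) where
  lie_smul c x y := by
    rw [← algebraMap_smul A c y, lie_smul, algebraMap_smul]

/-- The universal enveloping algebra `U(L ⊗ A)` of the map algebra `L ⊗ A`
(realized as `A ⊗[ℂ] L` with bracket `[a ⊗ z, b ⊗ z'] = ab ⊗ [z,z']`). -/
abbrev UEA (A : Type*) [CommRing A] [Algebra ℂ A]
    (L : Type*) [LieRing L] [LieAlgebra ℂ L] : Type _ :=
  UniversalEnvelopingAlgebra ℂ (A ⊗[ℂ] L)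

/-- The element `v ⊗ a` of the map algebra, viewed inside `U(L ⊗ A)`. -/
def el (a : A) (v : L) : UEA A L :=
  UniversalEnvelopingAlgebra.ι ℂ (a ⊗ₜ[ℂ] v)

lemma commute_el (a b : A) (v : L) : Commute (el a v : UEA A L) (el b v) := by
  letI : LieRing (UEA A L) := LieRing.ofAssociativeRing
  have h := (UniversalEnvelopingAlgebra.ι ℂ (L := A ⊗[ℂ] L)).map_lie (a ⊗ₜ[ℂ] v) (b ⊗ₜ[ℂ] v)
  rw [LieAlgebra.ExtendScalars.bracket_tmul, lie_self, TensorProduct.tmul_zero, map_zero,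
    Ring.lie_def] at h
  exact (sub_eq_zero.mp h.symm)

lemma commute_dp {S : Type*} [Ring S] [Algebra ℂ S] {u w : S} (h : Commute u w)
    (r s : ℕ) : Commute (dp u r) (dp w s) :=
  ((h.pow_pow r s).smul_left _).smul_right _

/-- `x^±(ψ) = ∏_a (x^± ⊗ a)^{(ψ(a))}` (generic in the element `v` of `L`);
the factors pairwise commute, so the product is unambiguous. -/
def xProd (v : L) (ψ : A →₀ ℕ) : UEA A L :=
  ψ.support.noncommProd (fun a => dp (el a v) (ψ a))
    (fun a _ b _ _ => commute_dp (commute_el a b v) _ _)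

/-- the predicate characterizing the recursively defined family
`p : F × F → U(L ⊗ A)` (relative to a choice `v` playing the role of `h`). -/
def IsP (v : L) (p : (A →₀ ℕ) → (A →₀ ℕ) → UEA A L) : Prop :=
  p 0 0 = 1 ∧
  (∀ φ χ, wt φ ≠ wt χ → p φ χ = 0) ∧
  (∀ φ χ, φ ≠ 0 → χ ≠ 0 → wt φ = wt χ →
    p φ χ = -((wt φ : ℂ)⁻¹) •
      ∑ ψ₁ ∈ (Finset.Iic φ).erase 0, ∑ ψ₂ ∈ (Finset.Iic χ).erase 0,
        ((mF ψ₁ * mF ψ₂ : ℕ) : ℂ) • (el (piF ψ₁ * piF ψ₂) v * p (φ - ψ₁) (χ - ψ₂)))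

/-- `p(χ) = p(χ, |χ|·χ₁)`. -/
def pOne (p : (A →₀ ℕ) → (A →₀ ℕ) → UEA A L) (χ : A →₀ ℕ) : UEA A L :=
  p χ (Finsupp.single (1 : A) (wt χ))

/-- the predicate characterizing the recursively defined family
`D^± : F³ → U(L ⊗ A)` (relative to a choice `v` playing the role of `x^±`). -/
def IsD (v : L) (D : (A →₀ ℕ) → (A →₀ ℕ) → (A →₀ ℕ) → UEA A L) : Prop :=
  (D 0 0 0 = 1) ∧
  (∀ ψ₁ ψ₂ : A →₀ ℕ, ¬(ψ₁ = 0 ∧ ψ₂ = 0) → D ψ₁ ψ₂ 0 = 0) ∧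
  (∀ (ψ₁ ψ₂ : A →₀ ℕ) (b : A), D ψ₁ ψ₂ (Finsupp.single b 1) =
      if wt ψ₁ = wt ψ₂ then ((mF ψ₁ * mF ψ₂ : ℕ) : ℂ) • el (b * (piF ψ₁ * piF ψ₂)) v
      else 0) ∧
  (∀ ψ₁ ψ₂ ψ₃ : A →₀ ℕ, 2 ≤ wt ψ₃ →
    D ψ₁ ψ₂ ψ₃ = (wt ψ₃ : ℂ)⁻¹ •
      ∑ φ₁ ∈ Finset.Iic ψ₁, ∑ φ₂ ∈ Finset.Iic ψ₂, ∑ b ∈ ψ₃.support,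
        D φ₁ φ₂ (Finsupp.single b 1) *
          D (ψ₁ - φ₁) (ψ₂ - φ₂) (ψ₃ - Finsupp.single b 1))

/-- `𝔻(ψ₁,ψ₂,ψ₃) = Σ_{φ₁≤ψ₁} Σ_{φ₂≤ψ₂} p(φ₁,φ₂) D⁺(ψ₁−φ₁,ψ₂−φ₂,ψ₃)`. -/
def DD (p : (A →₀ ℕ) → (A →₀ ℕ) → UEA A L)
    (Dp : (A →₀ ℕ) → (A →₀ ℕ) → (A →₀ ℕ) → UEA A L)
    (ψ₁ ψ₂ ψ₃ : A →₀ ℕ) : UEA A L :=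
  ∑ φ₁ ∈ Finset.Iic ψ₁, ∑ φ₂ ∈ Finset.Iic ψ₂,
    p φ₁ φ₂ * Dp (ψ₁ - φ₁) (ψ₂ - φ₂) ψ₃

/-- the Lie algebra `sl₂` presented by a basis `x⁻ = b 0`, `h = b 1`, `x⁺ = b 2`
with `[h,x^±] = ±2x^±`, `[x⁺,x⁻] = h`. -/
structure Sl2Data (L : Type*) [LieRing L] [LieAlgebra ℂ L] where
  b : Module.Basis (Fin 3) ℂ L
  lie_h_xp : ⁅b 1, b 2⁆ = (2 : ℂ) • b 2
  lie_h_xm : ⁅b 1, b 0⁆ = (-2 : ℂ) • b 0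
  lie_xp_xm : ⁅b 2, b 0⁆ = b 1

/-- `x⁻`. -/
def Sl2Data.xm (S : Sl2Data L) : L := S.b 0
/-- `h`. -/
def Sl2Data.h (S : Sl2Data L) : L := S.b 1
/-- `x⁺`. -/
def Sl2Data.xp (S : Sl2Data L) : L := S.b 2

/-- The data of a root system and Chevalley basis for a (finite-dimensional simple)
complex Lie algebra `g`: a Cartan subalgebra `H`, the roots `R`, the positive roots
`Rpos` enumerated as `β 0, …, β (m-1)`, simple roots `α 0, …, α (n-1)`, root vectors
`x s γ` (`s = true` for `x_γ⁺`, `s = false` for `x_γ⁻`), coroots, integral Cartan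
pairing, and structure constants `±(p+1)`. -/
structure ChevalleyData (g : Type*) [LieRing g] [LieAlgebra ℂ g] where
  n : ℕ
  m : ℕ
  H : LieSubalgebra ℂ g
  cartan : H.IsCartanSubalgebra
  R : Set (Module.Dual ℂ H)
  Rpos : Set (Module.Dual ℂ H)
  β : Fin m → Module.Dual ℂ H
  β_inj : Function.Injective β
  Rpos_eq : Rpos = Set.range β
  α : Fin n → Module.Dual ℂ H
  α_mem : ∀ i, α i ∈ Rpos
  R_eq : R = Rpos ∪ (fun γ => -γ) '' Rpos
  x : Bool → Module.Dual ℂ H → g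
  coroot : Module.Dual ℂ H → H
  chevBasis : Module.Basis ((Fin m × Bool) ⊕ Fin n) ℂ g
  chevBasis_x : ∀ (k : Fin m) (s : Bool), chevBasis (Sum.inl (k, s)) = x s (β k)
  chevBasis_h : ∀ i : Fin n, chevBasis (Sum.inr i) = (coroot (α i) : g)
  rootvec_pos : ∀ γ ∈ Rpos, ∀ t : H, ⁅(t : g), x true γ⁆ = γ t • x true γ
  rootvec_neg : ∀ γ ∈ Rpos, ∀ t : H, ⁅(t : g), x false γ⁆ = -(γ t) • x false γ
  coroot_def : ∀ γ ∈ Rpos, ⁅x true γ, x false γ⁆ = (coroot γ : g)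
  pairing : Module.Dual ℂ H → Module.Dual ℂ H → ℤ
  pairing_eq : ∀ γ ∈ Rpos, ∀ δ ∈ R, δ (coroot γ) = (pairing γ δ : ℂ)
  pairing_self : ∀ γ ∈ Rpos, pairing γ γ = 2
  struct : ∀ γ δ, γ ∈ Rpos → δ ∈ Rpos → γ + δ ∈ R → ∃ (c : ℤ) (pm : ℕ),
    (δ - (pm : ℤ) • γ ∈ R) ∧ (∀ q : ℕ, δ - (q : ℤ) • γ ∈ R → q ≤ pm) ∧
    (c = pm + 1 ∨ c = -(pm + 1)) ∧
    ⁅x true γ, x true δ⁆ = (c : ℂ) • x true (γ + δ) ∧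
    ⁅x false γ, x false δ⁆ = (-c : ℂ) • x false (γ + δ)

/-- `ψ ∈ F(𝔹)`: the multiset `ψ` is supported on the basis `𝔹 = range bA` of `A`. -/
def SuppB {ιA : Type*} (bA : Module.Basis ιA ℂ A) (ψ : A →₀ ℕ) : Prop :=
  ∀ a ∈ ψ.support, a ∈ Set.range bA

variable {g : Type*} [LieRing g] [LieAlgebra ℂ g]

/-- The integral form `U_ℤ(g ⊗ A)`: the `ℤ`-subalgebra of `U(g ⊗ A)` generated by all
divided powers `(x_α^± ⊗ b)^{(r)}`, `α ∈ R⁺`, `b ∈ 𝔹`, `r ∈ ℕ`. -/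
def UZ (C : ChevalleyData g) {ιA : Type*} (bA : Module.Basis ιA ℂ A) : Subalgebra ℤ (UEA A g) :=
  Algebra.adjoin ℤ {u : UEA A g | ∃ (k : Fin C.m) (s : Bool) (i : ιA) (r : ℕ),
    u = dp (el (bA i) (C.x s (C.β k))) r}

/-- `U_ℤ^±(g ⊗ A)` (one sign `s` only). -/
def UZpm (C : ChevalleyData g) {ιA : Type*} (bA : Module.Basis ιA ℂ A) (s : Bool) :
    Subalgebra ℤ (UEA A g) :=
  Algebra.adjoin ℤ {u : UEA A g | ∃ (k : Fin C.m) (i : ιA) (r : ℕ),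
    u = dp (el (bA i) (C.x s (C.β k))) r}


/-- generalized binomial coefficient `C(z,k) = z(z-1)⋯(z-k+1)/k!` (as a complex scalar). -/
def cchoose (z : ℂ) (k : ℕ) : ℂ :=
  (k.factorial : ℂ)⁻¹ * ∏ j ∈ Finset.range k, (z - (j : ℂ))

/-- the (finite) set `P_k(ψ)` of partitions of `ψ` into `k` parts,
i.e. finitely supported `χ : F → ℕ` with `Σ_φ χ(φ)·φ = ψ` and `Σ_φ χ(φ) = k`. -/
def partitions (ψ : A →₀ ℕ) (k : ℕ) : Finset ((A →₀ ℕ) →₀ ℕ) :=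
  (Finset.Iic ((Finset.Iic ψ).sum fun φ => Finsupp.single φ k)).filter
    (fun χ => (χ.sum fun φ c => c • φ) = ψ ∧ (χ.sum fun _ c => c) = k)

/-- the (finite) set `S_k(χ)` of finitely supported `ψ : F → ℕ` with
`Σ_φ ψ(φ)·φ ≤ χ` and `Σ_φ ψ(φ) = k`. -/
def subPartitions (χ : A →₀ ℕ) (k : ℕ) : Finset ((A →₀ ℕ) →₀ ℕ) :=
  (Finset.Iic ((Finset.Iic χ).sum fun φ => Finsupp.single φ k)).filter
    (fun ψ => (ψ.sum fun φ c => c • φ) ≤ χ ∧ (ψ.sum fun _ c => c) = k)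

/-- `U_ℤ^0(g ⊗ A)`: the `ℤ`-subalgebra generated by the `p_i(χ)`, `χ ∈ F(𝔹)`,
where `P i` is the family `p_i` (defined by recursion relative to `h_{α_i}`). -/
def UZ0 (C : ChevalleyData g) {ιA : Type*} (bA : Module.Basis ιA ℂ A)
    (P : Fin C.n → (A →₀ ℕ) → (A →₀ ℕ) → UEA A g) : Subalgebra ℤ (UEA A g) :=
  Algebra.adjoin ℤ {u : UEA A g | ∃ (i : Fin C.n) (χ : A →₀ ℕ), SuppB bA χ ∧ u = pOne (P i) χ}

section Reindex

open Finset

variable {M β : Type*} [AddCommMonoid M] [PartialOrder M] [CanonicallyOrderedAdd M]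

theorem Iic_zero_eq_singleton [LocallyFiniteOrderBot M] : Iic (0 : M) = {0} := by
  ext
  simp

variable [Sub M] [OrderedSub M] [AddLeftReflectLE M]

theorem tsub_lt_self_of_le_of_ne_zero {φ ψ : M} (hle : ψ ≤ φ) (hne : ψ ≠ 0) : φ - ψ < φ := by
  refine lt_of_le_of_ne tsub_le_self fun h => hne ?_
  have := add_tsub_cancel_of_le hle
  rw [h] at this
  simpa using this

variable [LocallyFiniteOrderBot M]

theorem sum_antidiagonal_eq_sum_Iic [AddCommMonoid β] [HasAntidiagonal M] (n : M)
    (f : M × M → β) : ∑ x ∈ antidiagonal n, f x = ∑ m ∈ Iic n, f (m, n - m) := by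
  refine sum_nbij' Prod.fst (fun m => (m, n - m)) ?_ ?_ ?_ ?_ ?_
  · intro x hx
    exact mem_Iic.2 (HasAntidiagonal.antidiagonal.fst_le hx)
  · intro m hm
    exact mem_antidiagonal.2 (add_tsub_cancel_of_le (mem_Iic.1 hm))
  · intro x hx
    rw [← mem_antidiagonal.1 hx, add_tsub_cancel_left]
  · intro m _
    rfl
  · intro x hx
    rw [← mem_antidiagonal.1 hx, add_tsub_cancel_left]

theorem sum_Iic_sum_Iic_tsub [AddCommMonoid β] (φ : M) (f : M → M → β) :
    ∑ ψ ∈ Iic φ, ∑ θ ∈ Iic (φ - ψ), f ψ θ = ∑ μ ∈ Iic φ, ∑ ψ ∈ Iic μ, f ψ (μ - ψ) := by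
  rw [sum_sigma', sum_sigma']
  refine sum_nbij' (fun x => ⟨x.1 + x.2, x.1⟩) (fun y => ⟨y.2, y.1 - y.2⟩) ?_ ?_ ?_ ?_ ?_
  · rintro ⟨ψ, θ⟩ hx
    simp only [mem_sigma, mem_Iic] at hx ⊢
    exact ⟨(le_tsub_iff_left hx.1).1 hx.2, le_self_add⟩
  · rintro ⟨μ, ψ⟩ hy
    simp only [mem_sigma, mem_Iic] at hy ⊢
    exact ⟨hy.2.trans hy.1, tsub_le_tsub_right hy.1 ψ⟩
  · rintro ⟨ψ, θ⟩ _
    simp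
  · rintro ⟨μ, ψ⟩ hy
    simp only [mem_sigma, mem_Iic] at hy
    simp [add_tsub_cancel_of_le hy.2]
  · rintro ⟨ψ, θ⟩ _
    simp

theorem sum_Iic_tsub_comm [AddCommMonoid β] (μ : M) (f : M → M → β) :
    ∑ ψ ∈ Iic μ, f ψ (μ - ψ) = ∑ θ ∈ Iic μ, f (μ - θ) θ := by
  refine sum_nbij' (μ - ·) (μ - ·) ?_ ?_ ?_ ?_ ?_ <;>
    simp +contextual [tsub_tsub_cancel_of_le]

theorem sum_Iic_sum_Iic_tsub_comm [AddCommMonoid β] (φ : M) (f : M → M → β) :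
    ∑ ψ ∈ Iic φ, ∑ θ ∈ Iic (φ - ψ), f ψ θ = ∑ θ ∈ Iic φ, ∑ ψ ∈ Iic (φ - θ), f ψ θ := by
  rw [sum_Iic_sum_Iic_tsub, sum_Iic_sum_Iic_tsub]
  exact sum_congr rfl fun μ _ => sum_Iic_tsub_comm μ _

variable [DecidableEq M] [AddCommGroup β]

theorem sum_erase_zero_sum_Iic_tsub (φ : M) (f : M → M → β) :
    ∑ ψ ∈ (Iic φ).erase 0, ∑ θ ∈ Iic (φ - ψ), f ψ θ
      = ∑ μ ∈ Iic φ, ∑ ψ ∈ (Iic μ).erase 0, f ψ (μ - ψ) := by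
  simp only [sum_erase_eq_sub (mem_Iic.2 zero_le), sum_sub_distrib, sum_Iic_sum_Iic_tsub,
    tsub_zero]

theorem sum_erase_zero_sum_Iic_tsub_comm (φ : M) (f : M → M → β) :
    ∑ ψ ∈ (Iic φ).erase 0, ∑ θ ∈ Iic (φ - ψ), f ψ θ
      = ∑ θ ∈ Iic φ, ∑ ψ ∈ (Iic (φ - θ)).erase 0, f ψ θ := by
  simp only [sum_erase_eq_sub (mem_Iic.2 zero_le), sum_sub_distrib, tsub_zero]
  rw [sum_Iic_sum_Iic_tsub_comm]

end Reindex

section Multinomial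

open Finset

variable {ι : Type*}

theorem wt_eq_degree (ψ : ι →₀ ℕ) : wt ψ = ψ.degree := rfl

@[simp] theorem wt_zero : wt (0 : ι →₀ ℕ) = 0 := rfl

theorem wt_eq_zero_iff {ψ : ι →₀ ℕ} : wt ψ = 0 ↔ ψ = 0 := degree_eq_zero_iff ψ

theorem wt_le_wt {ψ φ : ι →₀ ℕ} (h : ψ ≤ φ) : wt ψ ≤ wt φ := degree_mono h

theorem wt_tsub {ψ φ : ι →₀ ℕ} (h : ψ ≤ φ) : wt (φ - ψ) = wt φ - wt ψ := by
  have := map_add degree ψ (φ - ψ)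
  rw [add_tsub_cancel_of_le h] at this
  simp only [wt_eq_degree]
  omega

@[simp] theorem mF_zero : mF (0 : ι →₀ ℕ) = 1 := by
  simp [mF, Finsupp.multinomial_eq, Nat.multinomial]

/-- Vandermonde's identity for multinomial coefficients. -/
theorem sum_Iic_filter_wt_mF_mul (μ : ι →₀ ℕ) {j : ℕ} (hj : j ≤ wt μ) :
    ∑ ψ ∈ Iic μ with wt ψ = j, mF ψ * mF (μ - ψ) = mF μ := by
  open MvPolynomial in
  -- `T = ∑_{a ∈ supp μ} X a`, whose powers have the multinomial coefficients below `μ`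
  set T : MvPolynomial ι ℕ :=
    Finsupp.linearCombination ℕ X (Finsupp.indicator μ.support fun _ _ => 1)
  have hcoeff : ∀ ψ ≤ μ, ∀ n, coeff ψ (T ^ n) = if wt ψ = n then mF ψ else 0 := by
    intro ψ hψ n
    have hprod : (ψ.prod fun a m => (Finsupp.indicator μ.support fun _ _ => 1) a ^ m) = 1 :=
      Finset.prod_eq_one fun a ha => by
        simp [Finsupp.indicator_apply, Finsupp.support_mono hψ ha]
    rw [coeff_linearCombination_X_pow, hprod, mul_one, Nat.cast_id]
    rfl
  calc ∑ ψ ∈ Iic μ with wt ψ = j, mF ψ * mF (μ - ψ)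
      = ∑ ψ ∈ Iic μ, coeff ψ (T ^ j) * coeff (μ - ψ) (T ^ (wt μ - j)) := by
        rw [sum_filter]
        refine sum_congr rfl fun ψ hψ => ?_
        have hψ := mem_Iic.1 hψ
        rw [hcoeff ψ hψ, hcoeff (μ - ψ) tsub_le_self, wt_tsub hψ]
        by_cases h : wt ψ = j <;> simp [h]
    _ = coeff μ (T ^ j * T ^ (wt μ - j)) := by
        rw [coeff_mul, sum_antidiagonal_eq_sum_Iic]
    _ = mF μ := by
        rw [← pow_add, Nat.add_sub_cancel' hj, hcoeff μ le_rfl, if_pos rfl]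

theorem sum_Iic_mF_mul_smul {M : Type*} [AddCommMonoid M] (μ : ι →₀ ℕ) (f : ℕ → M) :
    ∑ ψ ∈ Iic μ, (mF ψ * mF (μ - ψ)) • f (wt ψ) = mF μ • ∑ j ∈ range (wt μ + 1), f j := by
  have hmaps : ∀ ψ ∈ Iic μ, wt ψ ∈ range (wt μ + 1) := fun ψ hψ =>
    mem_range.2 (Nat.lt_succ_of_le (wt_le_wt (mem_Iic.1 hψ)))
  rw [← sum_fiberwise_of_maps_to hmaps, Finset.smul_sum]
  refine sum_congr rfl fun j hj => ?_
  rw [← sum_Iic_filter_wt_mF_mul μ (Nat.lt_succ_iff.1 (mem_range.1 hj)), sum_smul]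
  exact sum_congr rfl fun ψ hψ => by rw [(mem_filter.1 hψ).2]

end Multinomial

section Coefficients

open Finset

variable {ι : Type*}

def balancedMF (κ : (ι →₀ ℕ) × (ι →₀ ℕ)) : ℕ :=
  if wt κ.1 = wt κ.2 then mF κ.1 * mF κ.2 else 0

def commCoeff (c : ℂ) (κ : (ι →₀ ℕ) × (ι →₀ ℕ)) : ℂ :=
  cchoose (c + wt κ.1 - 1) (wt κ.1) * balancedMF κ

@[simp] theorem balancedMF_zero : balancedMF (0 : (ι →₀ ℕ) × (ι →₀ ℕ)) = 1 := by
  simp [balancedMF]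

theorem balancedMF_eq_zero {κ : (ι →₀ ℕ) × (ι →₀ ℕ)} (h : wt κ.1 ≠ wt κ.2) :
    balancedMF κ = 0 := if_neg h

theorem commCoeff_eq_zero {c : ℂ} {κ : (ι →₀ ℕ) × (ι →₀ ℕ)} (h : wt κ.1 ≠ wt κ.2) :
    commCoeff c κ = 0 := by
  simp [commCoeff, balancedMF_eq_zero h]

theorem wt_tsub_fst_eq_snd_iff {κ μ : (ι →₀ ℕ) × (ι →₀ ℕ)} (hle : κ ≤ μ)
    (hκ : wt κ.1 = wt κ.2) : wt (μ - κ).1 = wt (μ - κ).2 ↔ wt μ.1 = wt μ.2 := by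
  rw [Prod.fst_sub, Prod.snd_sub, wt_tsub hle.1, wt_tsub hle.2]
  have := wt_le_wt hle.1
  have := wt_le_wt hle.2
  omega

theorem wt_tsub_fst_eq_snd_iff' {κ μ : (ι →₀ ℕ) × (ι →₀ ℕ)} (hle : κ ≤ μ)
    (hμ : wt μ.1 = wt μ.2) : wt (μ - κ).1 = wt (μ - κ).2 ↔ wt κ.1 = wt κ.2 := by
  rw [Prod.fst_sub, Prod.snd_sub, wt_tsub hle.1, wt_tsub hle.2]
  have := wt_le_wt hle.1
  have := wt_le_wt hle.2
  omega

theorem eq_zero_of_wt_fst_eq_zero {Φ : (ι →₀ ℕ) × (ι →₀ ℕ)} (hΦ : wt Φ.1 = wt Φ.2)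
    (h0 : wt Φ.1 = 0) : Φ = 0 :=
  Prod.ext (wt_eq_zero_iff.1 h0) (wt_eq_zero_iff.1 (hΦ ▸ h0))

theorem sum_Iic_balancedMF_mul_smul {M : Type*} [AddCommMonoid M] (μ : (ι →₀ ℕ) × (ι →₀ ℕ))
    (f : ℕ → M) :
    ∑ κ ∈ Iic μ, (balancedMF κ * balancedMF (μ - κ)) • f (wt κ.1)
      = balancedMF μ • ∑ j ∈ range (wt μ.1 + 1), f j := by
  by_cases hμ : wt μ.1 = wt μ.2
  · have hrow : ∀ κ₁ ∈ Iic μ.1,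
        ∑ κ₂ ∈ Iic μ.2, (balancedMF (κ₁, κ₂) * balancedMF (μ - (κ₁, κ₂))) • f (wt κ₁)
          = (mF κ₁ * mF (μ.1 - κ₁)) • (mF μ.2 • f (wt κ₁)) := by
      intro κ₁ hκ₁
      have hterm : ∀ κ₂ ∈ Iic μ.2,
          (balancedMF (κ₁, κ₂) * balancedMF (μ - (κ₁, κ₂))) • f (wt κ₁)
            = if wt κ₂ = wt κ₁ then
                (mF κ₁ * mF (μ.1 - κ₁)) • ((mF κ₂ * mF (μ.2 - κ₂)) • f (wt κ₁)) else 0 := by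
        intro κ₂ hκ₂
        by_cases h : wt κ₁ = wt κ₂
        · have h' := (wt_tsub_fst_eq_snd_iff (κ := (κ₁, κ₂)) ⟨mem_Iic.1 hκ₁, mem_Iic.1 hκ₂⟩ h).2 hμ
          rw [balancedMF, balancedMF, if_pos h, if_pos h', if_pos h.symm, smul_smul]
          congr 1
          simp only [Prod.fst_sub, Prod.snd_sub]
          ring
        · rw [balancedMF_eq_zero h, zero_mul, zero_smul, if_neg (Ne.symm h)]
      rw [sum_congr rfl hterm, ← sum_filter, ← Finset.smul_sum, ← sum_smul,
        sum_Iic_filter_wt_mF_mul μ.2 (hμ ▸ wt_le_wt (mem_Iic.1 hκ₁))]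
    rw [Iic_prod_def, sum_product, sum_congr rfl hrow,
      sum_Iic_mF_mul_smul μ.1 (fun j => mF μ.2 • f j), ← Finset.smul_sum,
      smul_smul, balancedMF, if_pos hμ]
  · rw [balancedMF_eq_zero hμ, zero_smul]
    refine sum_eq_zero fun κ hκ => ?_
    by_cases h : wt κ.1 = wt κ.2
    · rw [balancedMF_eq_zero (mt (wt_tsub_fst_eq_snd_iff (mem_Iic.1 hκ) h).1 hμ), mul_zero,
        zero_smul]
    · rw [balancedMF_eq_zero h, zero_mul, zero_smul]

@[simp] theorem cchoose_zero (z : ℂ) : cchoose z 0 = 1 := by simp [cchoose]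

theorem cchoose_succ (z : ℂ) (k : ℕ) :
    (k + 1) * cchoose z (k + 1) = z * cchoose (z - 1) k := by
  rw [cchoose, cchoose, Finset.prod_range_succ', Nat.factorial_succ]
  have h1 : ∀ j ∈ range k, z - ((j + 1 : ℕ) : ℂ) = (z - 1) - (j : ℂ) := by
    intro j _; push_cast; ring
  rw [Finset.prod_congr rfl h1]
  have hk : (k : ℂ) + 1 ≠ 0 := Nat.cast_add_one_ne_zero k
  have hf : (k.factorial : ℂ) ≠ 0 := Nat.cast_ne_zero.2 (Nat.factorial_ne_zero k)
  push_cast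
  field_simp
  ring

/-- The hockey-stick identity for generalized binomial coefficients. -/
theorem mul_sum_range_cchoose (z : ℂ) (k : ℕ) :
    z * ∑ i ∈ range k, cchoose (z + i - 1) i = k * cchoose (z + k - 1) k := by
  induction k with
  | zero => simp
  | succ k ih =>
    rw [sum_range_succ, mul_add, ih]
    have := cchoose_succ (z + k) k
    push_cast
    rw [show z + (k + 1) - 1 = z + k by ring, this]
    ring

theorem mul_sum_erase_balancedMF_mul_commCoeff (c : ℂ) (μ : (ι →₀ ℕ) × (ι →₀ ℕ)) :
    c * ∑ κ ∈ (Iic μ).erase 0, (balancedMF κ : ℂ) * commCoeff c (μ - κ)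
      = wt μ.1 * commCoeff c μ := by
  -- Vandermonde collapses the convolution to `balancedMF μ` times a hockey-stick sum
  have hfull : ∑ κ ∈ Iic μ, (balancedMF κ : ℂ) * commCoeff c (μ - κ)
      = balancedMF μ * ∑ i ∈ range (wt μ.1 + 1), cchoose (c + i - 1) i := by
    have hterm : ∀ κ ∈ Iic μ, (balancedMF κ : ℂ) * commCoeff c (μ - κ)
        = (balancedMF κ * balancedMF (μ - κ)) •
            cchoose (c + (wt μ.1 - wt κ.1 : ℕ) - 1) (wt μ.1 - wt κ.1) := by
      intro κ hκ
      rw [commCoeff, Prod.fst_sub, wt_tsub (mem_Iic.1 hκ).1, nsmul_eq_mul]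
      push_cast
      ring
    rw [sum_congr rfl hterm, sum_Iic_balancedMF_mul_smul μ
        (fun j => cchoose (c + (wt μ.1 - j : ℕ) - 1) (wt μ.1 - j)), nsmul_eq_mul,
      ← sum_range_reflect (fun i => cchoose (c + i - 1) i)]
    simp only [add_tsub_cancel_right]
  rw [sum_erase_eq_sub (mem_Iic.2 zero_le), hfull, sum_range_succ, tsub_zero, balancedMF_zero,
    Nat.cast_one, one_mul, commCoeff]
  linear_combination (balancedMF μ : ℂ) * mul_sum_range_cchoose c (wt μ.1)

theorem sum_erase_zero_balancedMF_smul {M : Type*} [AddCommMonoid M] [Module ℂ M]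
    (Φ : (ι →₀ ℕ) × (ι →₀ ℕ)) (F : (ι →₀ ℕ) × (ι →₀ ℕ) → M)
    (hF : ∀ κ ≤ Φ, wt κ.1 ≠ wt κ.2 → F κ = 0) :
    ∑ κ ∈ (Iic Φ).erase 0, (balancedMF κ : ℂ) • F κ
      = ∑ ψ₁ ∈ (Iic Φ.1).erase 0, ∑ ψ₂ ∈ (Iic Φ.2).erase 0,
          ((mF ψ₁ * mF ψ₂ : ℕ) : ℂ) • F (ψ₁, ψ₂) := by
  have hsub : (Iic Φ.1).erase 0 ×ˢ (Iic Φ.2).erase 0 ⊆ (Iic Φ).erase 0 := by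
    intro κ hκ
    simp only [mem_product, mem_erase, mem_Iic] at hκ ⊢
    exact ⟨fun h => hκ.1.1 (congrArg Prod.fst h), hκ.1.2, hκ.2.2⟩
  -- a nonzero balanced `κ` has both components nonzero
  have hzero : ∀ κ ∈ (Iic Φ).erase 0, κ ∉ (Iic Φ.1).erase 0 ×ˢ (Iic Φ.2).erase 0 →
      (balancedMF κ : ℂ) • F κ = 0 := by
    intro κ hκ hnot
    by_cases hκ' : wt κ.1 = wt κ.2
    · refine absurd ?_ hnot
      have hne := ne_of_mem_erase hκ
      have hle := mem_Iic.1 (mem_of_mem_erase hκ)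
      simp only [mem_product, mem_erase, mem_Iic]
      refine ⟨⟨fun h => hne ?_, hle.1⟩, ⟨fun h => hne ?_, hle.2⟩⟩
      · exact eq_zero_of_wt_fst_eq_zero hκ' (by rw [h, wt_zero])
      · exact eq_zero_of_wt_fst_eq_zero hκ' (by rw [hκ', h, wt_zero])
    · rw [balancedMF_eq_zero hκ', Nat.cast_zero, zero_smul]
  rw [← sum_product', ← sum_subset hsub hzero]
  refine sum_congr rfl fun κ hκ => ?_
  by_cases hκ' : wt κ.1 = wt κ.2
  · rw [balancedMF, if_pos hκ']
  · rw [balancedMF_eq_zero hκ', hF κ (mem_Iic.1 (mem_of_mem_erase (hsub hκ))) hκ', smul_zero,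
      smul_zero]

theorem sum_Iic_commCoeff_smul {M : Type*} [AddCommMonoid M] [Module ℂ M] (c : ℂ)
    (φ χ : ι →₀ ℕ) (F : (ι →₀ ℕ) × (ι →₀ ℕ) → M) :
    ∑ θ ∈ Iic (φ, χ), commCoeff c θ • F θ
      = ∑ ψ₁ ∈ Iic φ, ∑ ψ₂ ∈ Iic χ, if wt ψ₁ = wt ψ₂ then
          (cchoose (c + wt ψ₁ - 1) (wt ψ₁) * ((mF ψ₁ * mF ψ₂ : ℕ) : ℂ)) • F (ψ₁, ψ₂) else 0 := by
  rw [← Iic_product_Iic, sum_product]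
  refine sum_congr rfl fun ψ₁ _ => sum_congr rfl fun ψ₂ _ => ?_
  by_cases h : wt ψ₁ = wt ψ₂ <;> simp [commCoeff, balancedMF, h]

end Coefficients

section Commutation

open Finset MulOpposite

variable {A R : Type*} [CommRing A] [Ring R] [Algebra ℂ R]

def piPair (κ : (A →₀ ℕ) × (A →₀ ℕ)) : A := piF κ.1 * piF κ.2

@[simp] theorem piPair_zero : piPair (0 : (A →₀ ℕ) × (A →₀ ℕ)) = 1 := by
  simp [piPair, piF]

theorem piPair_add (κ θ : (A →₀ ℕ) × (A →₀ ℕ)) : piPair (κ + θ) = piPair κ * piPair θ := by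
  simp only [piPair, piF, Prod.fst_add, Prod.snd_add]
  rw [prod_add_index' (fun _ => pow_zero _) fun _ _ _ => pow_add _ _ _,
    prod_add_index' (fun _ => pow_zero _) fun _ _ _ => pow_add _ _ _]
  ring

/-- The recursion for `p(φ, χ)`, with `p` uncurried and `h a` an arbitrary family in place of
`h ⊗ a`. As `p` vanishes off balanced pairs, the sum may run over all nonzero `κ ≤ Φ` instead of
pairs with both components nonzero; multiplied out, the identity then holds for every `Φ`. -/
structure IsPFamily (h : A → R) (P : (A →₀ ℕ) × (A →₀ ℕ) → R) : Prop where
  map_zero : P 0 = 1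
  eq_zero_of_wt_ne : ∀ Φ : (A →₀ ℕ) × (A →₀ ℕ), wt Φ.1 ≠ wt Φ.2 → P Φ = 0
  sum_erase_zero : ∀ Φ : (A →₀ ℕ) × (A →₀ ℕ),
    ∑ κ ∈ (Iic Φ).erase 0, (balancedMF κ : ℂ) • (h (piPair κ) * P (Φ - κ)) = -(wt Φ.1 : ℂ) • P Φ

variable {h x : A → R} {P : (A →₀ ℕ) × (A →₀ ℕ) → R} {c : ℂ}

theorem IsPFamily.commute (hP : IsPFamily h P) (hh : ∀ a b, Commute (h a) (h b)) (a : A)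
    (Φ : (A →₀ ℕ) × (A →₀ ℕ)) : Commute (h a) (P Φ) := by
  induction Φ using WellFoundedLT.induction with
  | _ Φ ih =>
  by_cases hΦ : wt Φ.1 = wt Φ.2
  swap
  · rw [hP.eq_zero_of_wt_ne Φ hΦ]
    exact Commute.zero_right _
  by_cases h0 : wt Φ.1 = 0
  · rw [eq_zero_of_wt_fst_eq_zero hΦ h0, hP.map_zero]
    exact Commute.one_right _
  have hN : (wt Φ.1 : ℂ) ≠ 0 := Nat.cast_ne_zero.2 h0
  have hsum : Commute (h a) (-(wt Φ.1 : ℂ) • P Φ) := by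
    rw [← hP.sum_erase_zero]
    refine Commute.sum_right _ _ _ fun κ hκ => ((hh _ _).mul_right (ih _ ?_)).smul_right _
    exact tsub_lt_self_of_le_of_ne_zero (mem_Iic.1 (mem_of_mem_erase hκ)) (ne_of_mem_erase hκ)
  simpa [smul_smul, inv_mul_cancel₀ hN] using hsum.smul_right (-(wt Φ.1 : ℂ))⁻¹

theorem IsPFamily.mulOpposite (hP : IsPFamily h P) (hh : ∀ a b, Commute (h a) (h b)) :
    IsPFamily (fun a => op (h a)) (fun Φ => op (P Φ)) where
  map_zero := by rw [hP.map_zero, op_one]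
  eq_zero_of_wt_ne Φ hΦ := by rw [hP.eq_zero_of_wt_ne Φ hΦ, op_zero]
  sum_erase_zero Φ := by
    simp only [← op_mul, ← op_smul, ← op_sum, ← (hP.commute hh _ _).eq, hP.sum_erase_zero]

/-- The right-hand side of the commutation formula for `x b * P Φ`. -/
def pastSum (c : ℂ) (P : (A →₀ ℕ) × (A →₀ ℕ) → R) (x : A → R) (Φ : (A →₀ ℕ) × (A →₀ ℕ))
    (b : A) : R :=
  ∑ θ ∈ Iic Φ, commCoeff c θ • (P (Φ - θ) * x (b * piPair θ))

theorem pastSum_zero (b : A) : pastSum c P x 0 b = P 0 * x b := by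
  simp [pastSum, Iic_zero_eq_singleton, commCoeff]

theorem IsPFamily.pastSum_eq_zero (hP : IsPFamily h P) {Φ : (A →₀ ℕ) × (A →₀ ℕ)}
    (hΦ : wt Φ.1 ≠ wt Φ.2) (b : A) : pastSum c P x Φ b = 0 := by
  refine sum_eq_zero fun θ hθ => ?_
  by_cases hθ' : wt θ.1 = wt θ.2
  · rw [hP.eq_zero_of_wt_ne _ (mt (wt_tsub_fst_eq_snd_iff (mem_Iic.1 hθ) hθ').1 hΦ), zero_mul,
      smul_zero]
  · rw [commCoeff_eq_zero hθ', zero_smul]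

theorem IsPFamily.sum_erase_zero_smul_mul_pastSum (hP : IsPFamily h P) (Φ : (A →₀ ℕ) × (A →₀ ℕ))
    (b : A) :
    ∑ κ ∈ (Iic Φ).erase 0, (balancedMF κ : ℂ) • (h (piPair κ) * pastSum c P x (Φ - κ) b)
      = ∑ θ ∈ Iic Φ, commCoeff c θ • ((-(wt (Φ - θ).1 : ℂ) • P (Φ - θ)) * x (b * piPair θ)) := by
  simp only [pastSum, Finset.mul_sum, Finset.smul_sum]
  rw [sum_erase_zero_sum_Iic_tsub_comm]
  refine sum_congr rfl fun θ _ => ?_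
  rw [← hP.sum_erase_zero, Finset.sum_mul, Finset.smul_sum]
  refine sum_congr rfl fun κ _ => ?_
  rw [tsub_right_comm, mul_smul_comm, smul_comm, smul_mul_assoc, mul_assoc]

theorem sum_erase_zero_smul_pastSum (Φ : (A →₀ ℕ) × (A →₀ ℕ)) (b : A) :
    ∑ κ ∈ (Iic Φ).erase 0, (balancedMF κ : ℂ) • pastSum c P x (Φ - κ) (piPair κ * b)
      = ∑ μ ∈ Iic Φ, (∑ κ ∈ (Iic μ).erase 0, (balancedMF κ : ℂ) * commCoeff c (μ - κ)) •
          (P (Φ - μ) * x (b * piPair μ)) := by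
  simp only [pastSum, Finset.smul_sum]
  rw [sum_erase_zero_sum_Iic_tsub]
  refine sum_congr rfl fun μ _ => ?_
  rw [sum_smul]
  refine sum_congr rfl fun κ hκ => ?_
  have hle := mem_Iic.1 (mem_of_mem_erase hκ)
  have hπ : piPair μ = piPair κ * piPair (μ - κ) := by
    rw [← piPair_add, add_tsub_cancel_of_le hle]
  rw [tsub_tsub_tsub_cancel_right hle, smul_smul, hπ, mul_left_comm, mul_assoc]

theorem IsPFamily.mul_eq_pastSum (hP : IsPFamily h P)
    (hx : ∀ a b, h a * x b - x b * h a = c • x (a * b)) (Φ : (A →₀ ℕ) × (A →₀ ℕ)) (b : A) :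
    x b * P Φ = pastSum c P x Φ b := by
  induction Φ using WellFoundedLT.induction generalizing b with
  | _ Φ ih =>
  by_cases hΦ : wt Φ.1 = wt Φ.2
  swap
  · rw [hP.eq_zero_of_wt_ne Φ hΦ, hP.pastSum_eq_zero hΦ, mul_zero]
  by_cases h0 : wt Φ.1 = 0
  · rw [eq_zero_of_wt_fst_eq_zero hΦ h0, pastSum_zero, hP.map_zero, one_mul, mul_one]
  have hN : -(wt Φ.1 : ℂ) ≠ 0 := neg_ne_zero.2 (Nat.cast_ne_zero.2 h0)
  refine smul_right_injective R hN ?_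
  calc -(wt Φ.1 : ℂ) • (x b * P Φ)
      = ∑ κ ∈ (Iic Φ).erase 0, (balancedMF κ : ℂ) • (h (piPair κ) * pastSum c P x (Φ - κ) b
          - c • pastSum c P x (Φ - κ) (piPair κ * b)) := by
        rw [← mul_smul_comm, ← hP.sum_erase_zero, Finset.mul_sum]
        refine sum_congr rfl fun κ hκ => ?_
        have hlt := tsub_lt_self_of_le_of_ne_zero (mem_Iic.1 (mem_of_mem_erase hκ))
          (ne_of_mem_erase hκ)
        rw [mul_smul_comm, ← mul_assoc, ← sub_sub_cancel (h (piPair κ) * x b) (x b * h _), hx,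
          sub_mul, mul_assoc, smul_mul_assoc, ih _ hlt, ih _ hlt]
    _ = ∑ θ ∈ Iic Φ, (commCoeff c θ • ((-(wt (Φ - θ).1 : ℂ) • P (Φ - θ)) * x (b * piPair θ))
          - (c * ∑ κ ∈ (Iic θ).erase 0, (balancedMF κ : ℂ) * commCoeff c (θ - κ)) •
            (P (Φ - θ) * x (b * piPair θ))) := by
        simp only [smul_sub, sum_sub_distrib, smul_comm _ c, ← Finset.smul_sum,
          hP.sum_erase_zero_smul_mul_pastSum, sum_erase_zero_smul_pastSum, mul_smul]
    _ = -(wt Φ.1 : ℂ) • pastSum c P x Φ b := by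
        rw [pastSum, Finset.smul_sum]
        refine sum_congr rfl fun θ hθ => ?_
        have hle := mem_Iic.1 hθ
        rw [mul_sum_erase_balancedMF_mul_commCoeff, Prod.fst_sub, wt_tsub hle.1,
          Nat.cast_sub (wt_le_wt hle.1), smul_mul_assoc, smul_smul, smul_smul, ← sub_smul]
        congr 1
        ring

theorem IsPFamily.mul_eq_sum_mul (hP : IsPFamily h P) (hh : ∀ a b, Commute (h a) (h b))
    (hx : ∀ a b, h a * x b - x b * h a = -c • x (a * b)) (Φ : (A →₀ ℕ) × (A →₀ ℕ)) (b : A) :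
    P Φ * x b = ∑ θ ∈ Iic Φ, commCoeff c θ • (x (b * piPair θ) * P (Φ - θ)) := by
  have hx' : ∀ a b, op (h a) * op (x b) - op (x b) * op (h a) = c • op (x (a * b)) := by
    intro a b
    rw [← op_mul, ← op_mul, ← op_sub, ← op_smul, ← neg_sub, hx, neg_smul, neg_neg]
  apply op_injective
  simpa [pastSum] using (hP.mulOpposite hh).mul_eq_pastSum hx' Φ b

end Commutation

section EnvelopingAlgebra

open Finset

theorem el_mul_sub_el_mul {v w : L} {c : ℂ} (h : ⁅v, w⁆ = c • w) (a b : A) :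
    el a v * el b w - el b w * el a v = c • el (a * b) w := by
  let : LieRing (UEA A L) := LieRing.ofAssociativeRing
  have hh := (UniversalEnvelopingAlgebra.ι ℂ (L := A ⊗[ℂ] L)).map_lie (a ⊗ₜ[ℂ] v) (b ⊗ₜ[ℂ] w)
  rw [LieAlgebra.ExtendScalars.bracket_tmul, h, TensorProduct.tmul_smul, map_smul,
    Ring.lie_def] at hh
  exact hh.symm

theorem IsP.isPFamily {v : L} {p : (A →₀ ℕ) → (A →₀ ℕ) → UEA A L} (hP : IsP v p) :
    IsPFamily (fun a => el a v) (fun Φ => p Φ.1 Φ.2) := by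
  refine ⟨hP.1, fun Φ hΦ => hP.2.1 _ _ hΦ, fun Φ => ?_⟩
  by_cases hΦ : wt Φ.1 = wt Φ.2
  swap
  · rw [hP.2.1 _ _ hΦ, smul_zero]
    refine sum_eq_zero fun κ hκ => ?_
    by_cases hκ' : wt κ.1 = wt κ.2
    · rw [hP.2.1 _ _ (mt (wt_tsub_fst_eq_snd_iff (mem_Iic.1 (mem_of_mem_erase hκ)) hκ').1 hΦ),
        mul_zero, smul_zero]
    · rw [balancedMF_eq_zero hκ', Nat.cast_zero, zero_smul]
  by_cases h0 : wt Φ.1 = 0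
  · rw [eq_zero_of_wt_fst_eq_zero hΦ h0, Iic_zero_eq_singleton, erase_singleton, sum_empty,
      Prod.fst_zero, wt_zero, Nat.cast_zero, neg_zero, zero_smul]
  have hφ : Φ.1 ≠ 0 := fun h => h0 (by rw [h, wt_zero])
  have hχ : Φ.2 ≠ 0 := fun h => h0 (by rw [hΦ, h, wt_zero])
  rw [hP.2.2 _ _ hφ hχ hΦ, smul_smul, neg_mul_neg, mul_inv_cancel₀ (Nat.cast_ne_zero.2 h0),
    one_smul]
  refine sum_erase_zero_balancedMF_smul Φ _ fun κ hle hκ => ?_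
  rw [hP.2.1 _ _ (mt (wt_tsub_fst_eq_snd_iff' hle hΦ).1 hκ), mul_zero]

end EnvelopingAlgebra

theorem x_past_p_general
    (C : ChevalleyData g)
    (γ : Module.Dual ℂ C.H) (hγ : γ ∈ C.Rpos) (i : Fin C.n)
    (b : A)
    (P : (A →₀ ℕ) → (A →₀ ℕ) → UEA A g)
    (hP : IsP ((C.coroot (C.α i) : g)) P)
    (φ χ : A →₀ ℕ) :
    (el b (C.x true γ) * P φ χ =
      ∑ ψ₁ ∈ Finset.Iic φ, ∑ ψ₂ ∈ Finset.Iic χ,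
        if wt ψ₁ = wt ψ₂ then
          (cchoose (γ (C.coroot (C.α i)) + (wt ψ₁ : ℂ) - 1) (wt ψ₁) *
              ((mF ψ₁ * mF ψ₂ : ℕ) : ℂ)) •
            (P (φ - ψ₁) (χ - ψ₂) * el (b * (piF ψ₁ * piF ψ₂)) (C.x true γ))
        else 0) ∧
    (P φ χ * el b (C.x false γ) =
      ∑ ψ₁ ∈ Finset.Iic φ, ∑ ψ₂ ∈ Finset.Iic χ,
        if wt ψ₁ = wt ψ₂ then
          (cchoose (γ (C.coroot (C.α i)) + (wt ψ₁ : ℂ) - 1) (wt ψ₁) *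
              ((mF ψ₁ * mF ψ₂ : ℕ) : ℂ)) •
            (el (b * (piF ψ₁ * piF ψ₂)) (C.x false γ) * P (φ - ψ₁) (χ - ψ₂))
        else 0) := by
  have hP' := hP.isPFamily
  constructor
  · exact (hP'.mul_eq_pastSum (el_mul_sub_el_mul (C.rootvec_pos γ hγ _)) (φ, χ) b).trans
      (sum_Iic_commCoeff_smul _ φ χ _)
  · exact (hP'.mul_eq_sum_mul (fun a b => commute_el a b _)
      (el_mul_sub_el_mul (C.rootvec_neg γ hγ _)) (φ, χ) b).trans (sum_Iic_commCoeff_smul _ φ χ _)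

/-- commutation of `x_α^± ⊗ b` past `p_i(φ,χ)` in `U(g ⊗ A)`. -/
theorem x_past_p
    [LieAlgebra.IsSimple ℂ g] [FiniteDimensional ℂ g]
    (C : ChevalleyData g)
    (γ : Module.Dual ℂ C.H) (hγ : γ ∈ C.Rpos) (i : Fin C.n)
    (hne : γ (C.coroot (C.α i)) ≠ 0) (b : A)
    (P : (A →₀ ℕ) → (A →₀ ℕ) → UEA A g)
    (hP : IsP ((C.coroot (C.α i) : g)) P)
    (φ χ : A →₀ ℕ) :
    (el b (C.x true γ) * P φ χ =
      ∑ ψ₁ ∈ Finset.Iic φ, ∑ ψ₂ ∈ Finset.Iic χ,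
        if wt ψ₁ = wt ψ₂ then
          (cchoose (γ (C.coroot (C.α i)) + (wt ψ₁ : ℂ) - 1) (wt ψ₁) *
              ((mF ψ₁ * mF ψ₂ : ℕ) : ℂ)) •
            (P (φ - ψ₁) (χ - ψ₂) * el (b * (piF ψ₁ * piF ψ₂)) (C.x true γ))
        else 0) ∧
    (P φ χ * el b (C.x false γ) =
      ∑ ψ₁ ∈ Finset.Iic φ, ∑ ψ₂ ∈ Finset.Iic χ,
        if wt ψ₁ = wt ψ₂ then
          (cchoose (γ (C.coroot (C.α i)) + (wt ψ₁ : ℂ) - 1) (wt ψ₁) *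
              ((mF ψ₁ * mF ψ₂ : ℕ) : ℂ)) •
            (el (b * (piF ψ₁ * piF ψ₂)) (C.x false γ) * P (φ - ψ₁) (χ - ψ₂))
        else 0) :=
  x_past_p_general C γ hγ i b P hP φ χ

end MapAlgebra
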